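/- Let F be a field and α, β ∈ F with αβ ≠ 0. Then the algebra C(α,β,0) is isomorphic to the algebra C(1,1,0). -/

import Mathlib

open Module

section Defs

variable (F : Type*) [Field F]

/-- `I` is a (two-sided) ideal of the algebra `(A, mul)`. -/
def IsIdeal {A : Type*} [AddCommGroup A] [Module F A]
    (mul : A → A → A) (I : Submodule F A) : Prop :=
  ∀ a : A, ∀ u ∈ I, mul a u ∈ I ∧ mul u a ∈ I

/-- The (not necessarily associative or unital) algebra `(A, mul)` is simple:
its multiplication is nonzero and its only ideals are `⊥` and `⊤`. -/
def IsSimpleAlg {A : Type*} [AddCommGroup A] [Module F A]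
    (mul : A → A → A) : Prop :=
  (∃ u v : A, mul u v ≠ 0) ∧
  ∀ I : Submodule F A, IsIdeal F mul I → I = ⊥ ∨ I = ⊤

/-- The algebra `(A, mul)` has nil-rank `k`: there are `k` linearly independent
nil-elements of index 2, but no `k + 1` such elements. -/
def HasNilRank {A : Type*} [AddCommGroup A] [Module F A]
    (mul : A → A → A) (k : ℕ) : Prop :=
  (∃ v : Fin k → A, LinearIndependent F v ∧ ∀ i, mul (v i) (v i) = 0) ∧
  ∀ v : Fin (k + 1) → A, LinearIndependent F v → ∃ i, mul (v i) (v i) ≠ 0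

/-- The algebras `(A, mulA)` and `(B, mulB)` are isomorphic. -/
def AlgIso {A B : Type*} [AddCommGroup A] [Module F A] [AddCommGroup B] [Module F B]
    (mulA : A → A → A) (mulB : B → B → B) : Prop :=
  ∃ φ : A ≃ₗ[F] B, ∀ u v : A, φ (mulA u v) = mulB (φ u) (φ v)

/-- The algebras `(A, mulA)` and `(B, mulB)` are isotopic. -/
def Isotopic {A B : Type*} [AddCommGroup A] [Module F A] [AddCommGroup B] [Module F B]
    (mulA : A → A → A) (mulB : B → B → B) : Prop :=
  ∃ φ ψ ξ : A ≃ₗ[F] B, ∀ u v : A, mulB (φ u) (ψ v) = ξ (mulA u v)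

/-- `(e, x, y)` is a canonical basis of `A` realizing the unital commutative algebra
`C(α, β, γ)`: `e` is a multiplicative identity, `x² = y² = 0`,
and `xy = yx = α·1 + β·x + γ·y`. (`C(1,0,0)` is the Jordan algebra `J₂`.) -/
def IsCAlg {A : Type*} [AddCommGroup A] [Module F A]
    (m : A →ₗ[F] A →ₗ[F] A) (α β γ : F) (e x y : A) : Prop :=
  LinearIndependent F ![e, x, y] ∧
  Submodule.span F {e, x, y} = ⊤ ∧
  (∀ u, m e u = u) ∧ (∀ u, m u e = u) ∧
  m x x = 0 ∧ m y y = 0 ∧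
  m x y = α • e + β • x + γ • y ∧ m y x = α • e + β • x + γ • y

end Defs

namespace IsCAlg

variable {F A : Type*} [Field F] [AddCommGroup A] [Module F A]
  {m : A →ₗ[F] A →ₗ[F] A} {α β γ : F} {e x y : A}

theorem span_range_eq_top (hA : IsCAlg F m α β γ e x y) :
    Submodule.span F (Set.range ![e, x, y]) = ⊤ := by
  rw [Matrix.range_cons, Matrix.range_cons_cons_empty, Set.singleton_union]
  exact hA.2.1

noncomputable def basis (hA : IsCAlg F m α β γ e x y) : Basis (Fin 3) F A :=
  Basis.mk hA.1 hA.span_range_eq_top.ge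

@[simp]
theorem coe_basis (hA : IsCAlg F m α β γ e x y) : ⇑hA.basis = ![e, x, y] :=
  Basis.coe_mk _ _

/-- The rescaling `e ↦ e'`, `x ↦ s • x'`, `y ↦ t • y'` is multiplicative: it sends
`xy = α + βx + γy` to `α + β s x' + γ t y'`, and `(s x')(t y') = s t (α' + β' x' + γ' y')`. -/
theorem algIso_of_rescale {B : Type*} [AddCommGroup B] [Module F B]
    {m' : B →ₗ[F] B →ₗ[F] B} {α' β' γ' : F} {e' x' y' : B}
    (hA : IsCAlg F m α β γ e x y) (hB : IsCAlg F m' α' β' γ' e' x' y') (s t : Fˣ)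
    (hα : α = s * t * α') (hβ : β = t * β') (hγ : γ = s * γ') :
    AlgIso F (fun u v : A => m u v) (fun u v : B => m' u v) := by
  obtain ⟨-, -, heA, heA', hxxA, hyyA, hxyA, hyxA⟩ := id hA
  obtain ⟨-, -, heB, heB', hxxB, hyyB, hxyB, hyxB⟩ := id hB
  let φ : A ≃ₗ[F] B := hA.basis.equiv (hB.basis.unitsSMul ![1, s, t]) (Equiv.refl _)
  have hφ : ∀ i, φ (hA.basis i) = (![1, s, t] i : F) • hB.basis i := fun i =>
    (hA.basis.equiv_apply i _ _).trans (Basis.unitsSMul_apply i)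
  have hφe : φ e = e' := by simpa using hφ 0
  have hφx : φ x = (s : F) • x' := by simpa using hφ 1
  have hφy : φ y = (t : F) • y' := by simpa using hφ 2
  have hmul : m.compr₂ φ.toLinearMap = m'.compl₁₂ φ.toLinearMap φ.toLinearMap := by
    refine LinearMap.ext_basis hA.basis hA.basis fun i j => ?_
    fin_cases i <;> fin_cases j <;>
      simp [heA, heA', hxxA, hyyA, hxyA, hyxA, hφe, hφx, hφy, heB, heB', hxxB, hyyB, hxyB,
        hyxB, hα, hβ, hγ, smul_smul, smul_add, mul_comm, mul_left_comm]
  exact ⟨φ, fun u v => LinearMap.congr_fun₂ hmul u v⟩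

end IsCAlg

/-- If `αβ ≠ 0`, then `C(α, β, 0)` is isomorphic to `C(1, 1, 0)`. -/
theorem stmt9 {F : Type*} [Field F] (α β : F) (h : α * β ≠ 0)
    {A : Type*} [AddCommGroup A] [Module F A]
    (m : A →ₗ[F] A →ₗ[F] A) (e x y : A)
    (hA : IsCAlg F m α β 0 e x y)
    {B : Type*} [AddCommGroup B] [Module F B]
    (m' : B →ₗ[F] B →ₗ[F] B) (e' x' y' : B)
    (hB : IsCAlg F m' 1 1 0 e' x' y') :
    AlgIso F (fun u v : A => m u v) (fun u v : B => m' u v) := by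
  have hα : α ≠ 0 := left_ne_zero_of_mul h
  have hβ : β ≠ 0 := right_ne_zero_of_mul h
  refine hA.algIso_of_rescale hB (Units.mk0 (α / β) (div_ne_zero hα hβ)) (Units.mk0 β hβ)
    ?_ (by simp) (by simp)
  simp [hβ]
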